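/- Let Γ* be a prefix closed, intersection closed, and singleton suffix closed finite set of predicates over D. For fixed s, the family of sets X_s(α; Γ*) = {x ∈ D^s : x ∈ *α, and for all β ∈ Γ* with α > β, x ∉ *β}, indexed by α ∈ Γ*, is pairwise disjoint; moreover, for any α ∈ Γ*, the set X_s(α) = {x ∈ D^s : x ∈ *α} is the disjoint union of X_s(β; Γ*) over β ∈ Γ* with α ≥ β. -/

import Mathlib

open scoped Classical

noncomputable section

/-- A predicate of arity `ar` over `D`: a set of words over `D`, all of length `ar`. -/
structure GPred (D : Type*) where
  ar : ℕ
  s : Set (List D)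
  len : ∀ w ∈ s, w.length = ar

namespace GPred

variable {D : Type*}

/-- `*α`: the set of words whose suffix of length `α.ar` lies in `α`. -/
def star (α : GPred D) : Set (List D) :=
  {w | α.ar ≤ w.length ∧ w.drop (w.length - α.ar) ∈ α.s}

/-- The operation `α | β`: restrict the longer predicate to tuples whose suffix lies
in the shorter one. -/
def bar (α β : GPred D) : GPred D :=
  if β.ar ≤ α.ar then
    ⟨α.ar, {w | w ∈ α.s ∧ w.drop (α.ar - β.ar) ∈ β.s}, fun w hw => α.len w hw.1⟩
  else
    ⟨β.ar, {w | w ∈ β.s ∧ w.drop (β.ar - α.ar) ∈ α.s}, fun w hw => β.len w hw.1⟩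

/-- `α⁻`: drop the last coordinate. -/
def minus (α : GPred D) : GPred D :=
  ⟨α.ar - 1, {w | ∃ a : D, w ++ [a] ∈ α.s}, by
    rintro w ⟨a, ha⟩
    have h := α.len _ ha
    simp at h
    omega⟩

/-- `α⁻ × {a}`. -/
def sufSingle (α : GPred D) (a : D) : GPred D :=
  ⟨α.ar, {w | ∃ w', (∃ b : D, w' ++ [b] ∈ α.s) ∧ w = w' ++ [a]}, by
    rintro w ⟨w', ⟨b, hb⟩, rfl⟩
    have h := α.len _ hb
    simp at h ⊢
    omega⟩

/-- Prefix projection `α_{1:i}`. -/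
def prefProj (α : GPred D) (i : ℕ) : GPred D :=
  ⟨i, {w | w.length = i ∧ ∃ t, w ++ t ∈ α.s}, fun _ hw => hw.1⟩

/-- Suffix projection of length `i`, i.e. `α_{‖α‖-i+1:‖α‖}`. -/
def sufProj (α : GPred D) (i : ℕ) : GPred D :=
  ⟨i, {w | w.length = i ∧ ∃ t, t ++ w ∈ α.s}, fun _ hw => hw.1⟩

/-- A predicate is simple if it is a cartesian product of subsets of `D`. -/
def IsSimple (α : GPred D) : Prop :=
  ∃ Ωs : List (Set D), α.ar = Ωs.length ∧ α.s = {w | List.Forall₂ (· ∈ ·) w Ωs}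

/-- `α ≥ β` iff `*α ⊇ *β`. -/
def pge (α β : GPred D) : Prop := β.star ⊆ α.star

/-- `α > β`. -/
def pgt (α β : GPred D) : Prop := pge α β ∧ α ≠ β

/-- `β ⊊ α`: strict inclusion of predicates of equal arity. -/
def pssub (β α : GPred D) : Prop := β.ar = α.ar ∧ β.s ⊂ α.s

/-- `α ≻ β` iff `‖β‖ > ‖α‖` and the suffix projection `β_{‖β‖-‖α‖+1:‖β‖} ⊆ α`. -/
def psucc (α β : GPred D) : Prop := α.ar < β.ar ∧ (β.sufProj α.ar).s ⊆ α.s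

/-- `α ⪰ β`. -/
def psucceq (α β : GPred D) : Prop := psucc α β ∨ α = β

def PrefClosed (G : Set (GPred D)) : Prop := ∀ ρ ∈ G, 1 ≤ ρ.ar → ρ.minus ∈ G

def InterClosed (G : Set (GPred D)) : Prop := ∀ α ∈ G, ∀ β ∈ G, α.bar β ∈ G

def SSClosed (G : Set (GPred D)) : Prop := ∀ ρ ∈ G, 1 ≤ ρ.ar → ∀ a : D, ρ.sufSingle a ∈ G

/-- `closure(Γ^∩)`: the smallest prefix- and intersection-closed superset of `Γ`. -/
def piClosure (Γ : Set (GPred D)) : Set (GPred D) :=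
  ⋂₀ {G | Γ ⊆ G ∧ PrefClosed G ∧ InterClosed G}

/-- `Γ*`: the smallest prefix-, intersection- and singleton-suffix-closed superset of `Γ`. -/
def fullClosure (Γ : Set (GPred D)) : Set (GPred D) :=
  ⋂₀ {G | Γ ⊆ G ∧ PrefClosed G ∧ InterClosed G ∧ SSClosed G}

/-- `Γ°`: the singleton suffix closure `Γ ∪ {ρ⁻ × {a} : ρ ∈ Γ, a ∈ D}`. -/
def sscSet (Γ : Set (GPred D)) : Set (GPred D) :=
  Γ ∪ {σ | ∃ ρ ∈ Γ, 1 ≤ ρ.ar ∧ ∃ a : D, σ = ρ.sufSingle a}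

/-- Edges of the Hasse diagram of `(G, ≥)`. -/
def HasseGe (G : Set (GPred D)) (α β : GPred D) : Prop :=
  α ∈ G ∧ β ∈ G ∧ pgt α β ∧ ¬ ∃ γ ∈ G, pgt α γ ∧ pgt γ β

/-- Edges of the Hasse diagram of `(G, ⊇)`. -/
def HasseSub (G : Set (GPred D)) (α β : GPred D) : Prop :=
  α ∈ G ∧ β ∈ G ∧ pssub β α ∧ ¬ ∃ γ ∈ G, pssub γ α ∧ pssub β γ

/-- Edges of the graph `G[G]`. -/
def EdgeG (G : Set (GPred D)) (α β : GPred D) : Prop :=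
  α ∈ G ∧ β ∈ G ∧ psucc α β ∧
    ¬ ∃ γ ∈ G, (psucc α γ ∧ psucc γ β) ∨ (pssub γ α ∧ psucc γ β)

/-- `X_s(α; G)`. -/
def X (s : ℕ) (α : GPred D) (G : Set (GPred D)) : Set (List D) :=
  {x | x.length = s ∧ x ∈ α.star ∧ ∀ β ∈ G, pgt α β → x ∉ β.star}

/-- `X_s(α)`. -/
def Xall (s : ℕ) (α : GPred D) : Set (List D) :=
  {x | x.length = s ∧ x ∈ α.star}

/-- Projection of `α` onto its last coordinate. -/
def projLast (α : GPred D) : Set D := {a | ∃ w, w ++ [a] ∈ α.s}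

/-- The cartesian-product predicate `Ω₁ × ⋯ × Ω_l`. -/
def predOfList (Ωs : List (Set D)) : GPred D :=
  ⟨Ωs.length, {w | List.Forall₂ (· ∈ ·) w Ωs}, fun _ hw => List.Forall₂.length_eq hw⟩

end GPred

/-!
If `x` lay in both `X_s(α; Γ*)` and `X_s(β; Γ*)` for `α ≠ β`, then `α | β ∈ Γ*` would contain `x`
and lie strictly below `α` or `β`. Conversely, for `x ∈ *α`, a member of `Γ*` below `α` whose star
contains `x` and is minimal for inclusion has `x` in its `X_s`: a predicate with a nonempty star is
determined by it, so strictly smaller predicates have strictly smaller stars.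
-/

namespace GPred

variable {D : Type*}

lemma ext_of_ar_eq_of_s_eq {α β : GPred D} (har : α.ar = β.ar) (hs : α.s = β.s) : α = β := by
  cases α; cases β; simp_all

lemma mem_s_iff_mem_star {α : GPred D} {w : List D} (hw : w.length = α.ar) :
    w ∈ α.s ↔ w ∈ α.star := by
  simp [star, hw]

lemma ar_le_of_star_subset {α β : GPred D} (h : α.star ⊆ β.star) (hne : α.star.Nonempty) :
    β.ar ≤ α.ar := by
  obtain ⟨w, -, hw⟩ := hne
  have hlen := α.len _ hw
  have := (h ((mem_s_iff_mem_star hlen).mp hw)).1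
  omega

lemma eq_of_star_eq {α β : GPred D} (h : α.star = β.star) (hne : α.star.Nonempty) : α = β := by
  have har : α.ar = β.ar :=
    le_antisymm (ar_le_of_star_subset h.symm.subset (h ▸ hne)) (ar_le_of_star_subset h.subset hne)
  refine ext_of_ar_eq_of_s_eq har (Set.ext fun w => ?_)
  by_cases hw : w.length = α.ar
  · rw [mem_s_iff_mem_star hw, mem_s_iff_mem_star (hw.trans har), h]
  · exact iff_of_false (fun hα => hw (α.len w hα)) (fun hβ => hw (har ▸ β.len w hβ))

lemma star_bar_of_ar_le {α β : GPred D} (h : β.ar ≤ α.ar) :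
    (α.bar β).star = α.star ∩ β.star := by
  ext w
  simp only [bar, h, if_true, star, Set.mem_ofPred_eq, Set.mem_inter_iff, List.drop_drop]
  have hdrop : α.ar ≤ w.length → w.length - α.ar + (α.ar - β.ar) = w.length - β.ar := by omega
  constructor
  · rintro ⟨hle, hα, hβ⟩
    exact ⟨⟨hle, hα⟩, h.trans hle, hdrop hle ▸ hβ⟩
  · rintro ⟨⟨hle, hα⟩, -, hβ⟩
    exact ⟨hle, hα, (hdrop hle).symm ▸ hβ⟩

lemma bar_comm_of_ar_lt {α β : GPred D} (h : α.ar < β.ar) : α.bar β = β.bar α := by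
  simp [bar, h.le, not_le.mpr h]

lemma star_bar (α β : GPred D) : (α.bar β).star = α.star ∩ β.star := by
  rcases le_or_gt β.ar α.ar with h | h
  · exact star_bar_of_ar_le h
  · rw [bar_comm_of_ar_lt h, star_bar_of_ar_le h.le, Set.inter_comm]

lemma X_disjoint {G : Set (GPred D)} (hint : InterClosed G) (s : ℕ) {α β : GPred D}
    (hα : α ∈ G) (hβ : β ∈ G) (hne : α ≠ β) : Disjoint (X s α G) (X s β G) := by
  refine Set.disjoint_left.mpr fun x ⟨_, hxα, hαmin⟩ ⟨_, hxβ, hβmin⟩ => ?_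
  have hγ : α.bar β ∈ G := hint α hα β hβ
  have hx : x ∈ (α.bar β).star := (star_bar α β).symm ▸ ⟨hxα, hxβ⟩
  by_cases h : α = α.bar β
  · exact hβmin _ hγ
      ⟨(star_bar α β).trans_subset Set.inter_subset_right, fun hb => hne (h.trans hb.symm)⟩ hx
  · exact hαmin _ hγ ⟨(star_bar α β).trans_subset Set.inter_subset_left, h⟩ hx

lemma Xall_eq_biUnion_X {G : Set (GPred D)} (hfin : G.Finite) (s : ℕ) {α : GPred D}
    (hα : α ∈ G) : Xall s α = ⋃ β ∈ {β ∈ G | pge α β}, X s β G := by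
  ext x
  simp only [Xall, Set.mem_ofPred_eq, Set.mem_iUnion, exists_prop]
  constructor
  · rintro ⟨hlen, hxα⟩
    obtain ⟨β, ⟨hβ, hαβ, hxβ⟩, hmin⟩ := Set.Finite.exists_minimalFor star
      {γ ∈ G | pge α γ ∧ x ∈ γ.star} (hfin.subset fun _ hγ => hγ.1) ⟨α, hα, le_refl _, hxα⟩
    refine ⟨β, ⟨hβ, hαβ⟩, hlen, hxβ, fun γ hγ hβγ hxγ => hβγ.2 (eq_of_star_eq ?_ ⟨x, hxβ⟩)⟩
    exact le_antisymm (hmin ⟨hγ, hβγ.1.trans hαβ, hxγ⟩ hβγ.1) hβγ.1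
  · rintro ⟨β, ⟨-, hαβ⟩, hlen, hxβ, -⟩
    exact ⟨hlen, hαβ hxβ⟩

end GPred

open GPred in
theorem X_disjoint_and_union_general {D : Type*} (G : Set (GPred D))
    (hfin : G.Finite) (hint : InterClosed G)
    (s : ℕ) :
    (∀ α ∈ G, ∀ β ∈ G, α ≠ β → Disjoint (X s α G) (X s β G)) ∧
    (∀ α ∈ G, Xall s α = ⋃ β ∈ {β ∈ G | pge α β}, X s β G) :=
  ⟨fun _ hα _ hβ hne => X_disjoint hint s hα hβ hne, fun _ hα => Xall_eq_biUnion_X hfin s hα⟩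

open GPred in
/-- the sets `X_s(α; Γ*)`, `α ∈ Γ*`, are pairwise disjoint, and
`X_s(α)` is the union of `X_s(β; Γ*)` over `β ∈ Γ*` with `α ≥ β`. -/
theorem X_disjoint_and_union {D : Type*} [Fintype D] (G : Set (GPred D))
    (hfin : G.Finite) (hpref : PrefClosed G) (hint : InterClosed G) (hss : SSClosed G)
    (s : ℕ) :
    (∀ α ∈ G, ∀ β ∈ G, α ≠ β → Disjoint (X s α G) (X s β G)) ∧
    (∀ α ∈ G, Xall s α = ⋃ β ∈ {β ∈ G | pge α β}, X s β G) :=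
  X_disjoint_and_union_general G hfin hint s
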